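/- arXiv:1610.04714 — 2 statements merged into one kernel-verified Lean document; each statement's English description precedes it below -/
import Mathlib

section
/- (RBK step as gossip) Let n ≥ 1, let H be a simple graph on vertex set {1,…,n}, and let V = {y ∈ ℝⁿ : y_i = y_j for every edge (i,j) of H}, a linear subspace of ℝⁿ. Then for every x ∈ ℝⁿ and every vertex i, the i-th coordinate of the orthogonal projection of x onto V equals the average of the coordinates x_j over all vertices j in the connected component of i in H; that is, (proj_V x)_i = (1/|C_i|)∑_{j ∈ C_i} x_j, where C_i is the connected component of i in H. -/
/-!
Vectors in the consensus subspace are exactly those constant on connected components. The vector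
`y` of component averages is one of them, and for every `z` constant on components,
`∑ₖ yₖ zₖ = ∑ₖ ∑_{j ~ k} xⱼ zⱼ / |Cⱼ| = ∑ⱼ xⱼ zⱼ` by counting each `j` once for every `k` in its
component. So `x - y` is orthogonal to the subspace and `y` is the projection of `x`.
-/
open scoped Classical

/-- The subspace of `ℝⁿ` (with the Euclidean inner product) of vectors that agree across
every edge of the simple graph `H`. -/
def consensusSubspace (n : ℕ) (H : SimpleGraph (Fin n)) :
    Submodule ℝ (EuclideanSpace ℝ (Fin n)) where
  carrier := {y | ∀ i j : Fin n, H.Adj i j → y i = y j}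
  add_mem' := by
    intro a b ha hb i j hij
    simp only [PiLp.add_apply, ha i j hij, hb i j hij]
  zero_mem' := by intro i j _; rfl
  smul_mem' := by
    intro t a ha i j hij
    simp only [PiLp.smul_apply, ha i j hij]

open Finset

namespace SimpleGraph

variable {V : Type*} {G : SimpleGraph V}

theorem Reachable.apply_eq_of_forall_adj {α : Type*} {f : V → α}
    (hf : ∀ a b, G.Adj a b → f a = f b) {a b : V} (hab : G.Reachable a b) : f a = f b := by
  obtain ⟨w⟩ := hab
  induction w with
  | nil => rfl
  | cons hadj _ ih => exact (hf _ _ hadj).trans ih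

variable [Fintype V] [DecidableRel G.Reachable] {𝕜 : Type*} [Field 𝕜]

def componentAverage (G : SimpleGraph V) [DecidableRel G.Reachable] (x : V → 𝕜) (i : V) : 𝕜 :=
  (∑ j ∈ univ.filter (G.Reachable i), x j) / #(univ.filter (G.Reachable i))

theorem filter_reachable_eq_of_reachable {a b : V} (hab : G.Reachable a b) :
    univ.filter (G.Reachable a) = univ.filter (G.Reachable b) := by
  ext k
  simp only [mem_filter, mem_univ, true_and]
  exact ⟨hab.symm.trans, hab.trans⟩

theorem componentAverage_eq_of_reachable (x : V → 𝕜) {a b : V} (hab : G.Reachable a b) :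
    G.componentAverage x a = G.componentAverage x b := by
  rw [componentAverage, componentAverage, filter_reachable_eq_of_reachable hab]

theorem card_filter_reachable_ne_zero [CharZero 𝕜] (i : V) :
    (#(univ.filter (G.Reachable i)) : 𝕜) ≠ 0 :=
  Nat.cast_ne_zero.mpr (card_ne_zero_of_mem (mem_filter.mpr ⟨mem_univ i, .refl i⟩))

theorem sum_componentAverage_mul [CharZero 𝕜] (x z : V → 𝕜)
    (hz : ∀ a b, G.Reachable a b → z a = z b) :
    ∑ k, G.componentAverage x k * z k = ∑ k, x k * z k := by
  set C : V → Finset V := fun k => univ.filter (G.Reachable k)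
  have hterm : ∀ k, G.componentAverage x k * z k = ∑ j ∈ C k, x j * z j / #(C j) := by
    intro k
    rw [componentAverage, div_mul_eq_mul_div, sum_mul, sum_div]
    refine sum_congr rfl fun j hj => ?_
    have hkj : G.Reachable k j := (mem_filter.mp hj).2
    rw [hz k j hkj, filter_reachable_eq_of_reachable hkj]
  have hcount : ∀ j, univ.filter (G.Reachable · j) = C j := fun j =>
    filter_congr fun _ _ => reachable_comm
  calc ∑ k, G.componentAverage x k * z k
      = ∑ k, ∑ j ∈ C k, x j * z j / #(C j) := sum_congr rfl fun k _ => hterm k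
    _ = ∑ j, ∑ k ∈ univ.filter (G.Reachable · j), x j * z j / #(C j) :=
        sum_comm' (by simp [C])
    _ = ∑ j, x j * z j := by
        refine sum_congr rfl fun j _ => ?_
        rw [sum_const, hcount, nsmul_eq_mul, mul_div_cancel₀ _ (card_filter_reachable_ne_zero j)]

end SimpleGraph

open SimpleGraph

theorem mem_consensusSubspace_iff_forall_reachable {n : ℕ} {H : SimpleGraph (Fin n)}
    {y : EuclideanSpace ℝ (Fin n)} :
    y ∈ consensusSubspace n H ↔ ∀ a b, H.Reachable a b → y a = y b :=
  ⟨fun hy _ _ => Reachable.apply_eq_of_forall_adj hy, fun hy a b hab => hy a b hab.reachable⟩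

theorem orthogonalProjection_consensus_apply_general (n : ℕ) (H : SimpleGraph (Fin n))
    (x : EuclideanSpace ℝ (Fin n)) (i : Fin n) :
    (Submodule.orthogonalProjection (consensusSubspace n H) x : EuclideanSpace ℝ (Fin n)) i
      = (∑ j ∈ Finset.univ.filter (fun j => H.Reachable i j), x j)
          / (Finset.univ.filter (fun j => H.Reachable i j)).card := by
  have hy : WithLp.toLp 2 (H.componentAverage x) ∈ consensusSubspace n H :=
    mem_consensusSubspace_iff_forall_reachable.mpr fun _ _ =>
      componentAverage_eq_of_reachable x
  have hproj : (consensusSubspace n H).starProjection x = WithLp.toLp 2 (H.componentAverage x) := by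
    refine Submodule.eq_starProjection_of_mem_of_inner_eq_zero hy fun z hz => ?_
    rw [inner_sub_left, sub_eq_zero]
    simp only [PiLp.inner_apply, RCLike.inner_apply, conj_trivial, mul_comm (z _)]
    exact (sum_componentAverage_mul x z (mem_consensusSubspace_iff_forall_reachable.mp hz)).symm
  exact congrArg (· i) hproj

/-- RBK step as gossip: the `i`-th coordinate of the orthogonal projection of
`x` onto the subspace `V = {y : y i = y j for every edge (i,j) of H}` is the average of
the coordinates `x j` over the connected component of `i` in `H`. -/
theorem orthogonalProjection_consensus_apply (n : ℕ) (hn : 1 ≤ n) (H : SimpleGraph (Fin n))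
    (x : EuclideanSpace ℝ (Fin n)) (i : Fin n) :
    (Submodule.orthogonalProjection (consensusSubspace n H) x : EuclideanSpace ℝ (Fin n)) i
      = (∑ j ∈ Finset.univ.filter (fun j => H.Reachable i j), x j)
          / (Finset.univ.filter (fun j => H.Reachable i j)).card :=
  orthogonalProjection_consensus_apply_general n H x i
end

section
/- (Complexity of SDA, primal form) Let E be a finite-dimensional real inner product space, Ω a finite set, (V_ω)_{ω∈Ω} subspaces with orthogonal projections P_ω, p_ω ≥ 0 weights summing to 1, H = ∑_ω p_ω P_ω, K = ker H, and λ = inf{⟨v,Hv⟩ : v ∈ K^⊥, ‖v‖=1}. Then for every v ∈ K^⊥ and every k ≥ 0: ∑_{s : {1,…,k} → Ω} (∏_{i=1}^k p_{s(i)}) · ‖(I − P_{s(k)})···(I − P_{s(1)}) v‖² ≤ (1 − λ)^k ‖v‖². -/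
/-- The expected projection operator `H = ∑ ω, p ω • P ω`, where `P ω` is the orthogonal
projection onto the subspace `V ω`. -/
noncomputable def expectedProj {E : Type*} [NormedAddCommGroup E] [InnerProductSpace ℝ E]
    [FiniteDimensional ℝ E] {Ω : Type*} [Fintype Ω] (V : Ω → Submodule ℝ E) (p : Ω → ℝ) :
    E →ₗ[ℝ] E :=
  ∑ ω, p ω • ((V ω).subtype ∘ₗ (Submodule.orthogonalProjectionOnto (V ω)).toLinearMap)

/-!
By Pythagoras, a single step has expected squared error
`∑ ω, p ω * ‖(I - P ω) v‖ ^ 2 = ‖v‖ ^ 2 - ⟪v, H v⟫ ≤ (1 - λ) * ‖v‖ ^ 2` for `v ∈ Kᗮ`.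
Every `V ω` with `p ω > 0` lies in `Kᗮ` (a vector of `K` has `⟪u, H u⟫ = 0`, hence is orthogonal
to all such `V ω`), so each step that occurs with positive probability keeps the error in `Kᗮ`.
Conditioning on the first sample and inducting on `k` gives the factor `(1 - λ) ^ k`.
-/

open Submodule Finset

theorem Fin.sum_univ_succ_pi {Ω M : Type*} [Fintype Ω] [AddCommMonoid M] {k : ℕ}
    (f : (Fin (k + 1) → Ω) → M) : ∑ s, f s = ∑ ω, ∑ t : Fin k → Ω, f (Fin.cons ω t) := by
  rw [← (Fin.consEquiv fun _ => Ω).sum_comp, Fintype.sum_prod_type]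
  rfl

theorem sum_prod_mul_foldl_ofFn_le_pow {α Ω : Type*} [Fintype Ω] (step : α → Ω → α)
    (p : Ω → ℝ) (f : α → ℝ) (hp : ∀ ω, 0 ≤ p ω) {S : Set α}
    (hS : ∀ ω, 0 < p ω → Set.MapsTo (step · ω) S S) {c : ℝ} (hc : 0 ≤ c)
    (hcontract : ∀ x ∈ S, ∑ ω, p ω * f (step x ω) ≤ c * f x) (k : ℕ) {x : α} (hx : x ∈ S) :
    ∑ s : Fin k → Ω, (∏ i, p (s i)) * f ((List.ofFn s).foldl step x) ≤ c ^ k * f x := by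
  induction k generalizing x with
  | zero => simp
  | succ k ih =>
    have hfirst : ∀ ω, p ω * ∑ t : Fin k → Ω, (∏ i, p (t i)) *
        f ((List.ofFn t).foldl step (step x ω)) ≤ p ω * (c ^ k * f (step x ω)) := by
      intro ω
      rcases (hp ω).lt_or_eq with hpω | hpω
      · exact mul_le_mul_of_nonneg_left (ih (hS ω hpω hx)) (hp ω)
      · simp [← hpω]
    calc ∑ s : Fin (k + 1) → Ω, (∏ i, p (s i)) * f ((List.ofFn s).foldl step x)
        = ∑ ω, p ω * ∑ t : Fin k → Ω, (∏ i, p (t i)) *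
            f ((List.ofFn t).foldl step (step x ω)) := by
          simp only [Fin.sum_univ_succ_pi, Fin.prod_univ_succ, List.ofFn_succ, Fin.cons_zero,
            Fin.cons_succ, List.foldl_cons, mul_sum, mul_assoc]
      _ ≤ ∑ ω, p ω * (c ^ k * f (step x ω)) := sum_le_sum fun ω _ => hfirst ω
      _ = c ^ k * ∑ ω, p ω * f (step x ω) := by
          rw [mul_sum]
          exact sum_congr rfl fun ω _ => by ring
      _ ≤ c ^ k * (c * f x) := mul_le_mul_of_nonneg_left (hcontract x hx) (pow_nonneg hc k)
      _ = c ^ (k + 1) * f x := by ring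

section Rayleigh

variable {E : Type*} [NormedAddCommGroup E] [InnerProductSpace ℝ E] {T : E →ₗ[ℝ] E}
  {U : Submodule ℝ E}

/-- The paper's `λ` for `T = H`, `U = Kᗮ`; as a real `sInf` it is `0` when `U = ⊥`. -/
noncomputable def rayleighInf (T : E →ₗ[ℝ] E) (U : Submodule ℝ E) : ℝ :=
  sInf {r : ℝ | ∃ w ∈ U, ‖w‖ = 1 ∧ r = (inner ℝ w (T w) : ℝ)}

theorem bddBelow_rayleigh (hT : ∀ w, 0 ≤ (inner ℝ w (T w) : ℝ)) :
    BddBelow {r : ℝ | ∃ w ∈ U, ‖w‖ = 1 ∧ r = (inner ℝ w (T w) : ℝ)} :=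
  ⟨0, by rintro _ ⟨w, -, -, rfl⟩; exact hT w⟩

theorem rayleighInf_mul_norm_sq_le (hT : ∀ w, 0 ≤ (inner ℝ w (T w) : ℝ)) {w : E} (hw : w ∈ U) :
    rayleighInf T U * ‖w‖ ^ 2 ≤ inner ℝ w (T w) := by
  rcases eq_or_ne w 0 with rfl | hw0
  · simp
  have hnorm : 0 < ‖w‖ := norm_pos_iff.mpr hw0
  have hunit : ‖‖w‖⁻¹ • w‖ = 1 := by
    rw [norm_smul, norm_inv, norm_norm, inv_mul_cancel₀ hnorm.ne']
  have hle : rayleighInf T U ≤ inner ℝ (‖w‖⁻¹ • w) (T (‖w‖⁻¹ • w)) :=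
    csInf_le (bddBelow_rayleigh hT) ⟨_, U.smul_mem _ hw, hunit, rfl⟩
  rw [map_smul, real_inner_smul_left, real_inner_smul_right, ← mul_assoc, ← mul_inv, ← sq,
    ← div_eq_inv_mul, le_div_iff₀ (by positivity)] at hle
  exact hle

theorem rayleighInf_le_one (hT : ∀ w, 0 ≤ (inner ℝ w (T w) : ℝ))
    (hT_le : ∀ w, (inner ℝ w (T w) : ℝ) ≤ ‖w‖ ^ 2) : rayleighInf T U ≤ 1 := by
  rcases Set.eq_empty_or_nonempty {r : ℝ | ∃ w ∈ U, ‖w‖ = 1 ∧ r = (inner ℝ w (T w) : ℝ)}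
    with hempty | ⟨r, hr⟩
  · rw [rayleighInf, hempty, Real.sInf_empty]
    exact zero_le_one
  · obtain ⟨w, hw, hw1, rfl⟩ := hr
    calc rayleighInf T U ≤ inner ℝ w (T w) := csInf_le (bddBelow_rayleigh hT) ⟨w, hw, hw1, rfl⟩
      _ ≤ 1 := by simpa [hw1] using hT_le w

end Rayleigh

theorem Submodule.norm_sub_orthogonalProjectionOnto_sq {E : Type*} [NormedAddCommGroup E]
    [InnerProductSpace ℝ E] (K : Submodule ℝ E) [K.HasOrthogonalProjection] (v : E) :
    ‖v - K.orthogonalProjectionOnto v‖ ^ 2 = ‖v‖ ^ 2 - ‖K.orthogonalProjectionOnto v‖ ^ 2 := by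
  have h := K.norm_sq_eq_add_norm_sq_starProjection v
  rw [starProjection_orthogonal, sub_apply, ContinuousLinearMap.id_apply,
    starProjection_apply, norm_coe] at h
  linarith

section ExpectedProj

variable {E : Type*} [NormedAddCommGroup E] [InnerProductSpace ℝ E] [FiniteDimensional ℝ E]
  {Ω : Type*} [Fintype Ω] (V : Ω → Submodule ℝ E) (p : Ω → ℝ)

theorem inner_expectedProj_self (v : E) :
    inner ℝ v (expectedProj V p v) = ∑ ω, p ω * ‖(V ω).orthogonalProjectionOnto v‖ ^ 2 := by
  simp only [expectedProj, LinearMap.sum_apply, LinearMap.smul_apply, LinearMap.comp_apply,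
    Submodule.coe_subtype, ContinuousLinearMap.coe_coe, inner_sum, real_inner_smul_right]
  refine sum_congr rfl fun ω _ => ?_
  rw [← (V ω).re_inner_starProjection_eq_normSq v, starProjection_apply, real_inner_comm]
  rfl

theorem sum_mul_norm_sub_orthogonalProjectionOnto_sq (hsum : ∑ ω, p ω = 1) (v : E) :
    ∑ ω, p ω * ‖v - (V ω).orthogonalProjectionOnto v‖ ^ 2
      = ‖v‖ ^ 2 - inner ℝ v (expectedProj V p v) := by
  simp only [norm_sub_orthogonalProjectionOnto_sq, inner_expectedProj_self, mul_sub,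
    sum_sub_distrib, ← sum_mul, hsum, one_mul]

variable {V p}

theorem inner_expectedProj_self_nonneg (hp : ∀ ω, 0 ≤ p ω) (v : E) :
    0 ≤ (inner ℝ v (expectedProj V p v) : ℝ) := by
  rw [inner_expectedProj_self]
  exact sum_nonneg fun ω _ => mul_nonneg (hp ω) (sq_nonneg _)

theorem inner_expectedProj_self_le (hp : ∀ ω, 0 ≤ p ω) (hsum : ∑ ω, p ω = 1) (v : E) :
    (inner ℝ v (expectedProj V p v) : ℝ) ≤ ‖v‖ ^ 2 := by
  have hsteps := sum_mul_norm_sub_orthogonalProjectionOnto_sq V p hsum v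
  have : 0 ≤ ∑ ω, p ω * ‖v - (V ω).orthogonalProjectionOnto v‖ ^ 2 :=
    sum_nonneg fun ω _ => mul_nonneg (hp ω) (sq_nonneg _)
  linarith

theorem ker_expectedProj_le_orthogonal (hp : ∀ ω, 0 ≤ p ω) {ω : Ω} (hpω : 0 < p ω) :
    LinearMap.ker (expectedProj V p) ≤ (V ω)ᗮ := by
  intro u hu
  have hzero : ∑ ω, p ω * ‖(V ω).orthogonalProjectionOnto u‖ ^ 2 = 0 := by
    rw [← inner_expectedProj_self, LinearMap.mem_ker.mp hu, inner_zero_right]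
  have hterm := (sum_eq_zero_iff_of_nonneg fun ω _ => mul_nonneg (hp ω) (sq_nonneg
    ‖(V ω).orthogonalProjectionOnto u‖)).mp hzero ω (mem_univ ω)
  rwa [mul_eq_zero, or_iff_right hpω.ne', sq_eq_zero_iff, norm_eq_zero,
    orthogonalProjectionOnto_eq_zero_iff] at hterm

theorem mapsTo_sub_orthogonalProjectionOnto (hp : ∀ ω, 0 ≤ p ω) {ω : Ω} (hpω : 0 < p ω) :
    Set.MapsTo (fun w => w - ((V ω).orthogonalProjectionOnto w : E))
      (LinearMap.ker (expectedProj V p))ᗮ (LinearMap.ker (expectedProj V p))ᗮ := fun _ hw =>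
  sub_mem hw ((isOrtho_iff_le.mpr (ker_expectedProj_le_orthogonal hp hpω)).symm (coe_mem _))

end ExpectedProj

/-- Complexity of SDA, primal form: for `v ∈ K^⊥` (`K = ker H`) and any
`k`, the expected squared norm of `(I − P_{s k}) ⋯ (I − P_{s 1}) v` over i.i.d. samples
`s : {1,…,k} → Ω` drawn from `p` is at most `(1 − λ)^k ‖v‖²`, where
`λ = inf {⟨w, H w⟩ : w ∈ K^⊥, ‖w‖ = 1}`. -/
theorem sda_complexity {E : Type*} [NormedAddCommGroup E] [InnerProductSpace ℝ E]
    [FiniteDimensional ℝ E] {Ω : Type*} [Fintype Ω] (V : Ω → Submodule ℝ E) (p : Ω → ℝ)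
    (hp : ∀ ω, 0 ≤ p ω) (hsum : ∑ ω, p ω = 1) (v : E)
    (hv : v ∈ (LinearMap.ker (expectedProj V p))ᗮ) (k : ℕ) :
    ∑ s : Fin k → Ω, (∏ i, p (s i)) *
        ‖(List.ofFn s).foldl (fun w ω => w - (Submodule.orthogonalProjectionOnto (V ω) w : E)) v‖ ^ 2
      ≤ (1 - sInf {r : ℝ | ∃ w ∈ (LinearMap.ker (expectedProj V p))ᗮ,
            ‖w‖ = 1 ∧ r = (inner ℝ w (expectedProj V p w) : ℝ)}) ^ k * ‖v‖ ^ 2 := by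
  have hnonneg := inner_expectedProj_self_nonneg (V := V) hp
  have hc : 0 ≤ 1 - rayleighInf (expectedProj V p) (LinearMap.ker (expectedProj V p))ᗮ :=
    sub_nonneg.mpr (rayleighInf_le_one hnonneg (inner_expectedProj_self_le hp hsum))
  refine sum_prod_mul_foldl_ofFn_le_pow _ p (‖·‖ ^ 2) hp
    (fun ω hpω => mapsTo_sub_orthogonalProjectionOnto hp hpω) hc (fun x hx => ?_) k hv
  calc ∑ ω, p ω * ‖x - (V ω).orthogonalProjectionOnto x‖ ^ 2
      = ‖x‖ ^ 2 - inner ℝ x (expectedProj V p x) :=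
        sum_mul_norm_sub_orthogonalProjectionOnto_sq V p hsum x
    _ ≤ ‖x‖ ^ 2 - rayleighInf (expectedProj V p) (LinearMap.ker (expectedProj V p))ᗮ * ‖x‖ ^ 2 :=
        sub_le_sub_left (rayleighInf_mul_norm_sq_le hnonneg hx) _
    _ = _ := by ring
end
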